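/- arXiv:2010.10770 — 2 statements merged into one kernel-verified Lean document; each statement's English description precedes it below -/
import Mathlib

section
/- Let K be an n×n real symmetric positive-definite matrix, F ∈ ℝⁿ, let U solve K U = F, let Ũ ∈ ℝⁿ be arbitrary, and set R = F − K Ũ. Let M be an n×n real symmetric matrix (representing the derivative dK/dμ of K with respect to a design parameter), let σ_min > 0 be the smallest eigenvalue of K, κ = ‖M‖ the operator (spectral) norm of M, and ν = ‖Ũ‖₂. Then the compliance-sensitivity error satisfies |Ũᵀ M Ũ − Uᵀ M U| ≤ (κ / σ_min²) ‖R‖₂² + 2 (κ ν / σ_min) ‖R‖₂. -/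
/-!
Write `U = Ut + E`. Since `K E = R` and `K ≥ σmin` as a quadratic form, coercivity gives
`‖E‖ ≤ ‖R‖ / σmin`. As `M` is symmetric, `Utᵀ M Ut − Uᵀ M U = −(Eᵀ M E + 2 Utᵀ M E)`, which is at
most `κ ‖E‖² + 2 κ ν ‖E‖` in absolute value.
-/

open Matrix
open scoped RealInnerProductSpace ComplexOrder

namespace Matrix

variable {n : Type*} [Fintype n] [DecidableEq n]

theorem IsHermitian.posSemidef_sub_algebraMap {𝕜 : Type*} [RCLike 𝕜] {A : Matrix n n 𝕜}
    (hA : A.IsHermitian) {σ : ℝ} (hσ : ∀ i, σ ≤ hA.eigenvalues i) :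
    (A - algebraMap ℝ _ σ).PosSemidef := by
  refine posSemidef_iff_isHermitian_and_spectrum_nonneg.mpr
    ⟨hA.sub (IsSelfAdjoint.algebraMap _ (.all σ)).isHermitian, ?_⟩
  rw [IsScalarTower.algebraMap_apply ℝ 𝕜, ← spectrum.sub_singleton_eq, hA.spectrum_eq_image_range]
  rintro _ ⟨_, ⟨_, ⟨i, rfl⟩, rfl⟩, _, rfl, rfl⟩
  change (0 : 𝕜) ≤ _ - _
  rw [RCLike.algebraMap_eq_ofReal, ← RCLike.ofReal_sub, RCLike.ofReal_nonneg, sub_nonneg]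
  exact hσ i

theorem IsHermitian.mul_dotProduct_self_le {A : Matrix n n ℝ} (hA : A.IsHermitian) {σ : ℝ}
    (hσ : ∀ i, σ ≤ hA.eigenvalues i) (x : n → ℝ) : σ * (x ⬝ᵥ x) ≤ x ⬝ᵥ A *ᵥ x := by
  have := (hA.posSemidef_sub_algebraMap hσ).dotProduct_mulVec_nonneg x
  rwa [star_trivial, sub_mulVec, dotProduct_sub, Algebra.algebraMap_eq_smul_one, smul_mulVec,
    one_mulVec, dotProduct_smul, smul_eq_mul, sub_nonneg] at this

end Matrix

section InnerProductSpace

variable {E F : Type*} [NormedAddCommGroup E] [InnerProductSpace ℝ E]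
  [NormedAddCommGroup F] [InnerProductSpace ℝ F]

theorem abs_inner_map_le (T : E →L[ℝ] F) (x : F) (y : E) :
    |⟪x, T y⟫| ≤ ‖T‖ * ‖x‖ * ‖y‖ :=
  calc |⟪x, T y⟫| ≤ ‖x‖ * ‖T y‖ := abs_real_inner_le_norm _ _
    _ ≤ ‖x‖ * (‖T‖ * ‖y‖) := by gcongr; exact T.le_opNorm y
    _ = ‖T‖ * ‖x‖ * ‖y‖ := by ring

theorem norm_le_div_of_mul_norm_sq_le_inner {σ : ℝ} (hσ : 0 < σ) {x y : E}
    (h : σ * ‖x‖ ^ 2 ≤ ⟪x, y⟫) : ‖x‖ ≤ ‖y‖ / σ := by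
  rw [le_div_iff₀ hσ]
  rcases (norm_nonneg x).eq_or_lt with hx | hx
  · rw [← hx, zero_mul]
    exact norm_nonneg y
  refine le_of_mul_le_mul_left ?_ hx
  calc ‖x‖ * (‖x‖ * σ) = σ * ‖x‖ ^ 2 := by ring
    _ ≤ ‖x‖ * ‖y‖ := h.trans (real_inner_le_norm x y)

theorem abs_inner_map_self_sub_le {T : E →L[ℝ] E} (hT : (T : E →ₗ[ℝ] E).IsSymmetric) (x u : E) :
    |⟪x, T x⟫ - ⟪u, T u⟫| ≤ ‖T‖ * ‖u - x‖ ^ 2 + 2 * (‖T‖ * ‖x‖) * ‖u - x‖ := by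
  set e := u - x
  have hcross : ⟪e, T x⟫ = ⟪x, T e⟫ := by
    rw [real_inner_comm]; simpa using hT x e
  have hdiff : ⟪x, T x⟫ - ⟪u, T u⟫ = -(⟪e, T e⟫ + 2 * ⟪x, T e⟫) := by
    rw [← add_sub_cancel x u, map_add, inner_add_left, inner_add_right, inner_add_right, hcross]
    ring
  calc |⟪x, T x⟫ - ⟪u, T u⟫| ≤ |⟪e, T e⟫| + 2 * |⟪x, T e⟫| := by
        rw [hdiff, abs_neg]
        exact (abs_add_le _ _).trans_eq (by rw [abs_mul, abs_two])
    _ ≤ ‖T‖ * ‖e‖ * ‖e‖ + 2 * (‖T‖ * ‖x‖ * ‖e‖) := by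
        gcongr <;> exact abs_inner_map_le T _ _
    _ = ‖T‖ * ‖e‖ ^ 2 + 2 * (‖T‖ * ‖x‖) * ‖e‖ := by ring

end InnerProductSpace

theorem EuclideanSpace.norm_toLp_eq_sqrt_dotProduct {n : Type*} [Fintype n] (x : n → ℝ) :
    ‖WithLp.toLp 2 x‖ = √(x ⬝ᵥ x) := by
  rw [norm_eq_sqrt_real_inner, EuclideanSpace.inner_toLp_toLp, star_trivial]

theorem compliance_sensitivity_error_bound_general {n : ℕ}
    (K : Matrix (Fin n) (Fin n) ℝ) (hK : K.PosDef)
    (F U Ut R : Fin n → ℝ) (hU : K *ᵥ U = F) (hR : R = F - K *ᵥ Ut)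
    (M : Matrix (Fin n) (Fin n) ℝ) (hM : M.IsSymm)
    (σmin : ℝ)
    (hσ : IsLeast (Set.range hK.isHermitian.eigenvalues) σmin)
    (κ ν : ℝ) (hκ : κ = ‖Matrix.toEuclideanCLM (𝕜 := ℝ) M‖)
    (hν : ν = Real.sqrt (Ut ⬝ᵥ Ut)) :
    |Ut ⬝ᵥ M *ᵥ Ut - U ⬝ᵥ M *ᵥ U| ≤
      (κ / σmin ^ 2) * Real.sqrt (R ⬝ᵥ R) ^ 2 +
        2 * (κ * ν / σmin) * Real.sqrt (R ⬝ᵥ R) := by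
  have hσpos : 0 < σmin := by
    obtain ⟨i, rfl⟩ := hσ.1
    exact hK.eigenvalues_pos i
  have hKerr : K *ᵥ (U - Ut) = R := by rw [hR, ← hU, mulVec_sub]
  have herr : ‖WithLp.toLp 2 (U - Ut)‖ ≤ ‖WithLp.toLp 2 R‖ / σmin := by
    refine norm_le_div_of_mul_norm_sq_le_inner hσpos ?_
    rw [← real_inner_self_eq_norm_sq, EuclideanSpace.inner_toLp_toLp,
      EuclideanSpace.inner_toLp_toLp, star_trivial, ← hKerr, dotProduct_comm (K *ᵥ _)]
    exact hK.isHermitian.mul_dotProduct_self_le (fun i ↦ hσ.2 ⟨i, rfl⟩) _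
  have hquad := abs_inner_map_self_sub_le (T := toEuclideanCLM (𝕜 := ℝ) M)
    (isSymmetric_toEuclideanLin_iff.mpr (isHermitian_iff_isSymm.mpr hM))
    (WithLp.toLp 2 Ut) (WithLp.toLp 2 U)
  simp only [inner_toEuclideanCLM, ← WithLp.toLp_sub, ← hκ,
    EuclideanSpace.norm_toLp_eq_sqrt_dotProduct, ← hν] at hquad herr
  have hκ0 : 0 ≤ κ := hκ ▸ norm_nonneg _
  have hν0 : 0 ≤ ν := hν ▸ Real.sqrt_nonneg _
  calc _ ≤ _ := hquad
    _ ≤ κ * (√(R ⬝ᵥ R) / σmin) ^ 2 + 2 * (κ * ν) * (√(R ⬝ᵥ R) / σmin) := by gcongr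
    _ = _ := by ring

/-- A posteriori residual-based error bound for the compliance sensitivity:
if `K` is symmetric positive definite with smallest eigenvalue `σmin > 0`,
`K U = F`, `R = F - K Ut`, `M` is symmetric (representing `dK/dμ`),
`κ = ‖M‖` is the spectral (operator) norm of `M` and `ν = ‖Ut‖₂`, then
`|Utᵀ M Ut − Uᵀ M U| ≤ (κ/σmin²) ‖R‖₂² + 2 (κ ν / σmin) ‖R‖₂`. -/
theorem compliance_sensitivity_error_bound {n : ℕ}
    (K : Matrix (Fin n) (Fin n) ℝ) (hK : K.PosDef)
    (F U Ut R : Fin n → ℝ) (hU : K *ᵥ U = F) (hR : R = F - K *ᵥ Ut)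
    (M : Matrix (Fin n) (Fin n) ℝ) (hM : M.IsSymm)
    (σmin : ℝ) (hσpos : 0 < σmin)
    (hσ : IsLeast (Set.range hK.isHermitian.eigenvalues) σmin)
    (κ ν : ℝ) (hκ : κ = ‖Matrix.toEuclideanCLM (𝕜 := ℝ) M‖)
    (hν : ν = Real.sqrt (Ut ⬝ᵥ Ut)) :
    |Ut ⬝ᵥ M *ᵥ Ut - U ⬝ᵥ M *ᵥ U| ≤
      (κ / σmin ^ 2) * Real.sqrt (R ⬝ᵥ R) ^ 2 +
        2 * (κ * ν / σmin) * Real.sqrt (R ⬝ᵥ R) :=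
  compliance_sensitivity_error_bound_general K hK F U Ut R hU hR M hM σmin hσ κ ν hκ hν
end

section
/- Let S be an N×l real matrix, let A = S Sᵀ, which is symmetric positive semidefinite with eigenvalues λ₁ ≥ λ₂ ≥ … ≥ λ_N ≥ 0 listed in decreasing order, and let 1 ≤ k ≤ N. Then for every N×k real matrix χ with orthonormal columns (χᵀ χ = I_k), the POD objective satisfies the lower bound ‖S − χ χᵀ S‖_F² ≥ Σ_{i=k+1}^{N} λ_i. -/
/-!
Diagonalise `A = S Sᵀ = U diag(λ) Uᵀ`. Then `‖S − χχᵀS‖_F² = tr A − tr(χᵀAχ)` and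
`tr(χᵀAχ) = ∑ λᵢ wᵢ`, where `wᵢ` is the `i`-th diagonal entry of the orthogonal projection
`BBᵀ`, `B = Uᵀχ`. These weights lie in `[0, 1]` and sum to `k`, and for decreasing `λ` such a
weighted sum is at most `λ₁ + ⋯ + λ_k` (Ky Fan).
-/

open Matrix

/-- The squared Frobenius norm of a real matrix: `‖A‖_F² = trace (Aᵀ A)`. -/
def frobSq {N l : ℕ} (A : Matrix (Fin N) (Fin l) ℝ) : ℝ := (Aᵀ * A).trace

open Finset

theorem sum_mul_le_sum_of_threshold {ι : Type*} [Fintype ι] [DecidableEq ι]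
    {lam w : ι → ℝ} {s : Finset ι} (t : ℝ)
    (hs : ∀ i ∈ s, t ≤ lam i) (hsc : ∀ i ∉ s, lam i ≤ t)
    (hw0 : ∀ i, 0 ≤ w i) (hw1 : ∀ i, w i ≤ 1) (hsum : ∑ i, w i = #s) :
    ∑ i, lam i * w i ≤ ∑ i ∈ s, lam i := by
  have hterm : ∀ i, (lam i - t) * (w i - if i ∈ s then 1 else 0) ≤ 0 := by
    intro i
    split_ifs with hi
    · exact mul_nonpos_of_nonneg_of_nonpos (sub_nonneg.2 (hs i hi)) (by linarith [hw1 i])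
    · exact mul_nonpos_of_nonpos_of_nonneg (sub_nonpos.2 (hsc i hi)) (by linarith [hw0 i])
  -- the `t`-terms cancel because `∑ w = #s`
  have hexpand : ∑ i, (lam i - t) * (w i - if i ∈ s then 1 else 0)
      = ∑ i, lam i * w i - ∑ i ∈ s, lam i := by
    simp only [mul_sub, sub_mul, sum_sub_distrib, ← mul_sum, mul_ite, mul_one, mul_zero,
      sum_ite_mem, univ_inter, sum_const, nsmul_eq_mul, hsum]
    ring
  linarith [sum_nonpos (s := univ) fun i _ => hterm i]

theorem Antitone.sum_mul_le_sum_filter_lt {N k : ℕ} {lam : Fin N → ℝ} (hlam : Antitone lam)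
    (hk1 : 1 ≤ k) (hkN : k ≤ N) {w : Fin N → ℝ}
    (hw0 : ∀ i, 0 ≤ w i) (hw1 : ∀ i, w i ≤ 1) (hsum : ∑ i, w i = k) :
    ∑ i, lam i * w i ≤ ∑ i ∈ univ.filter (fun i : Fin N => (i : ℕ) < k), lam i := by
  refine sum_mul_le_sum_of_threshold (lam ⟨k - 1, by omega⟩) ?_ ?_ hw0 hw1 ?_
  · intro i hi
    exact hlam (Fin.le_def.2 (by simp at hi ⊢; omega))
  · intro i hi
    exact hlam (Fin.mk_le_of_le_val (by simp at hi; omega))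
  · rw [hsum, Fin.card_filter_val_lt, min_eq_right hkN]

lemma mul_transpose_apply_self {m n : Type*} [Fintype n] (B : Matrix m n ℝ) (i : m) :
    (B * Bᵀ) i i = ∑ j, B i j ^ 2 := by
  simp only [mul_apply, transpose_apply, sq]

lemma mul_transpose_apply_self_le_one {m n : Type*} [Fintype m] [Fintype n] [DecidableEq n]
    {B : Matrix m n ℝ} (hB : Bᵀ * B = 1) (i : m) : (B * Bᵀ) i i ≤ 1 := by
  set P := B * Bᵀ
  have hidem : P * P = P := by
    simp only [P, Matrix.mul_assoc, ← Matrix.mul_assoc Bᵀ, hB, Matrix.one_mul]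
  have hsq : P i i = ∑ j, P i j ^ 2 := by
    have hsymm : Pᵀ = P := by simp only [P, transpose_mul, transpose_transpose]
    conv_lhs => rw [← hidem, mul_apply]
    refine sum_congr rfl fun j _ => ?_
    rw [← transpose_apply P j i, hsymm, sq]
  have : P i i ^ 2 ≤ P i i := hsq ▸ single_le_sum (fun j _ => sq_nonneg (P i j)) (mem_univ i)
  nlinarith

lemma trace_mul_transpose_of_transpose_mul_eq_one {m n : Type*} [Fintype m] [Fintype n]
    [DecidableEq n] {B : Matrix m n ℝ} (hB : Bᵀ * B = 1) :
    (B * Bᵀ).trace = Fintype.card n := by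
  rw [trace_mul_comm, hB, trace_one]

lemma trace_transpose_mul_diagonal_mul {m n : Type*} [Fintype m] [Fintype n] [DecidableEq m]
    (B : Matrix m n ℝ) (d : m → ℝ) :
    (Bᵀ * diagonal d * B).trace = ∑ i, d i * (B * Bᵀ) i i := by
  rw [trace_mul_comm, ← Matrix.mul_assoc, trace]
  simp only [diag_apply, mul_diagonal, mul_comm]

namespace Matrix.IsHermitian

variable {m : Type*} [Fintype m] [DecidableEq m] {A : Matrix m m ℝ}

lemma eq_mul_diagonal_mul_transpose (hA : A.IsHermitian) :
    A = (hA.eigenvectorUnitary : Matrix m m ℝ) * diagonal hA.eigenvalues *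
      (hA.eigenvectorUnitary : Matrix m m ℝ)ᵀ := by
  simpa [Unitary.conjStarAlgAut_apply, star_eq_conjTranspose] using hA.spectral_theorem

lemma eigenvectorUnitary_mul_transpose (hA : A.IsHermitian) :
    (hA.eigenvectorUnitary : Matrix m m ℝ) * (hA.eigenvectorUnitary : Matrix m m ℝ)ᵀ = 1 := by
  simpa only [star_eq_conjTranspose, conjTranspose_eq_transpose_of_trivial] using
    mem_unitaryGroup_iff.mp hA.eigenvectorUnitary.2

theorem exists_trace_transpose_mul_mul_eq {n : Type*} [Fintype n] [DecidableEq n]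
    (hA : A.IsHermitian) {χ : Matrix m n ℝ} (hχ : χᵀ * χ = 1) :
    ∃ w : m → ℝ, (∀ i, 0 ≤ w i) ∧ (∀ i, w i ≤ 1) ∧ ∑ i, w i = Fintype.card n ∧
      (χᵀ * A * χ).trace = ∑ i, hA.eigenvalues i * w i := by
  set U : Matrix m m ℝ := ↑hA.eigenvectorUnitary
  set B := Uᵀ * χ
  have hB : Bᵀ * B = 1 := by
    rw [transpose_mul, transpose_transpose, Matrix.mul_assoc, ← Matrix.mul_assoc U,
      hA.eigenvectorUnitary_mul_transpose, Matrix.one_mul, hχ]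
  refine ⟨fun i => (B * Bᵀ) i i, fun i => ?_, mul_transpose_apply_self_le_one hB,
    trace_mul_transpose_of_transpose_mul_eq_one hB, ?_⟩
  · simp only [mul_transpose_apply_self]
    positivity
  · rw [← trace_transpose_mul_diagonal_mul]
    conv_lhs => rw [hA.eq_mul_diagonal_mul_transpose]
    simp only [B, U, transpose_mul, transpose_transpose, Matrix.mul_assoc]

end Matrix.IsHermitian

lemma frobSq_sub_mul_transpose_mul {N l k : ℕ} (S : Matrix (Fin N) (Fin l) ℝ)
    {χ : Matrix (Fin N) (Fin k) ℝ} (hχ : χᵀ * χ = 1) :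
    frobSq (S - χ * χᵀ * S) = (S * Sᵀ).trace - (χᵀ * (S * Sᵀ) * χ).trace := by
  set C := χᵀ * S
  have hexpand : (S - χ * C)ᵀ * (S - χ * C) = Sᵀ * S - Cᵀ * C := by
    have hC : Sᵀ * χ = Cᵀ := by rw [transpose_mul, transpose_transpose]
    rw [transpose_sub, transpose_mul, Matrix.sub_mul, Matrix.mul_sub, Matrix.mul_sub,
      ← Matrix.mul_assoc Sᵀ, hC, Matrix.mul_assoc Cᵀ χᵀ, Matrix.mul_assoc Cᵀ,
      ← Matrix.mul_assoc χᵀ, hχ, Matrix.one_mul]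
    abel
  have hCC : (Cᵀ * C).trace = (χᵀ * (S * Sᵀ) * χ).trace := by
    rw [trace_mul_comm, transpose_mul, transpose_transpose]
    simp only [C, Matrix.mul_assoc]
  rw [frobSq, Matrix.mul_assoc, hexpand, trace_sub, hCC, trace_mul_comm]

/-- POD optimality lower bound: let `lam` list the eigenvalues of `A = S Sᵀ` in
decreasing order (`lam 0 = λ₁ ≥ … ≥ lam (N-1) = λ_N`). Then for `1 ≤ k ≤ N` and any
`N×k` matrix `χ` with orthonormal columns, the POD objective is bounded below by the
sum of the `N − k` trailing eigenvalues:
`‖S − χ χᵀ S‖_F² ≥ ∑_{i=k+1}^{N} λᵢ`. -/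
theorem pod_lower_bound {N l k : ℕ}
    (S : Matrix (Fin N) (Fin l) ℝ)
    (hA : (S * Sᵀ).IsHermitian)
    (lam : Fin N → ℝ) (hdec : Antitone lam)
    (hlam : ∃ σ : Equiv.Perm (Fin N), lam = hA.eigenvalues ∘ σ)
    (hk1 : 1 ≤ k) (hkN : k ≤ N)
    (χ : Matrix (Fin N) (Fin k) ℝ) (hχ : χᵀ * χ = 1) :
    ∑ i ∈ Finset.univ.filter (fun i : Fin N => k ≤ (i : ℕ)), lam i ≤
      frobSq (S - χ * χᵀ * S) := by
  obtain ⟨σ, rfl⟩ := hlam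
  obtain ⟨w, hw0, hw1, hsum, htrace⟩ := hA.exists_trace_transpose_mul_mul_eq hχ
  have hfan : ∑ i, hA.eigenvalues i * w i ≤
      ∑ i ∈ univ.filter (fun i : Fin N => (i : ℕ) < k), hA.eigenvalues (σ i) := by
    rw [← Equiv.sum_comp σ]
    exact hdec.sum_mul_le_sum_filter_lt hk1 hkN (fun i => hw0 _) (fun i => hw1 _)
      (by rw [Equiv.sum_comp σ w, hsum, Fintype.card_fin])
  have hsplit := sum_filter_add_sum_filter_not univ (fun i : Fin N => (i : ℕ) < k)
    (hA.eigenvalues ∘ σ)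
  simp only [not_lt, Function.comp_apply, Equiv.sum_comp σ hA.eigenvalues] at hsplit
  rw [frobSq_sub_mul_transpose_mul S hχ, htrace, hA.trace_eq_sum_eigenvalues]
  simp only [Function.comp_apply, RCLike.ofReal_real_eq_id, id]
  linarith
end
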